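/- Let Ω be a symmetric positive definite p×p matrix and S* positive semidefinite. If ρ > 0, then the function Ω ↦ −log|Ω| + tr(ΩS*) + ρ‖Ω‖₁ is coercive on the positive definite cone: it tends to +∞ as ‖Ω‖₁ → ∞ or as the smallest eigenvalue of Ω tends to 0 with ‖Ω‖ bounded. -/

import Mathlib

open Matrix Filter

-- trace = sum of eigenvalues for a real Hermitian matrix
lemma trace_eq_sum_eig {p : ℕ} {A : Matrix (Fin p) (Fin p) ℝ} (hA : A.IsHermitian) :
    A.trace = ∑ i, hA.eigenvalues i := by
  conv_lhs => rw [hA.spectral_theorem]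
  rw [Unitary.conjStarAlgAut_apply, Matrix.trace_mul_cycle]
  have h1 : (star (hA.eigenvectorUnitary : Matrix (Fin p) (Fin p) ℝ)) *
      (hA.eigenvectorUnitary : Matrix (Fin p) (Fin p) ℝ) = 1 := by
    exact Matrix.mem_unitaryGroup_iff'.mp hA.eigenvectorUnitary.2
  rw [h1, one_mul, Matrix.trace_diagonal]
  simp [RCLike.ofReal]

lemma trace_nonneg_of_psd {p : ℕ} {M : Matrix (Fin p) (Fin p) ℝ} (hM : M.PosSemidef) :
    0 ≤ M.trace := by
  rw [Matrix.trace]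
  apply Finset.sum_nonneg
  intro i _
  have := hM.re_dotProduct_nonneg (Pi.single i 1)
  simpa [dotProduct, Matrix.mulVec, Pi.single_apply] using this

open scoped MatrixOrder in
lemma trace_mul_psd_nonneg {p : ℕ} {A S : Matrix (Fin p) (Fin p) ℝ}
    (hA : A.PosDef) (hS : S.PosSemidef) : 0 ≤ (A * S).trace := by
  set B := CFC.sqrt A with hB
  have hBB : B * B = A := CFC.sqrt_mul_sqrt_self A hA.posSemidef.nonneg
  have hBH : B.IsHermitian := (CFC.sqrt_nonneg A).posSemidef.1
  have : (A * S).trace = (B * S * B).trace := by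
    rw [← hBB, mul_assoc, Matrix.trace_mul_comm]
  rw [this]
  have hpsd : (B * S * Bᴴ).PosSemidef := hS.mul_mul_conjTranspose_same B
  rw [hBH.eq] at hpsd
  exact trace_nonneg_of_psd hpsd

lemma trace_le_l1 {p : ℕ} (A : Matrix (Fin p) (Fin p) ℝ) :
    A.trace ≤ ∑ i, ∑ j, |A i j| := by
  rw [Matrix.trace]
  apply Finset.sum_le_sum
  intro i _
  calc A.diag i ≤ |A i i| := le_abs_self _
    _ ≤ ∑ j, |A i j| :=
      Finset.single_le_sum (f := fun j => |A i j|) (fun j _ => abs_nonneg _) (Finset.mem_univ i)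

lemma eig_le_l1 {p : ℕ} {A : Matrix (Fin p) (Fin p) ℝ} (hA : A.PosDef) (i : Fin p) :
    hA.1.eigenvalues i ≤ ∑ i, ∑ j, |A i j| := by
  calc hA.1.eigenvalues i ≤ ∑ j, hA.1.eigenvalues j :=
        Finset.single_le_sum (fun j _ => hA.posSemidef.eigenvalues_nonneg j) (Finset.mem_univ i)
    _ = A.trace := (trace_eq_sum_eig hA.1).symm
    _ ≤ _ := trace_le_l1 A

lemma logdet_le_l1 {p : ℕ} {A : Matrix (Fin p) (Fin p) ℝ} (hA : A.PosDef) :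
    Real.log A.det ≤ p * Real.log (∑ i, ∑ j, |A i j|) := by
  have hdet : A.det = ∏ i, hA.1.eigenvalues i := by
    simpa using hA.1.det_eq_prod_eigenvalues
  have hpos : ∀ i, 0 < hA.1.eigenvalues i := hA.eigenvalues_pos
  rw [hdet, Real.log_prod (fun i _ => (hpos i).ne')]
  calc ∑ i, Real.log (hA.1.eigenvalues i)
      ≤ ∑ _i : Fin p, Real.log (∑ i, ∑ j, |A i j|) :=
        Finset.sum_le_sum (fun i _ =>
          Real.log_le_log (hpos i) (eig_le_l1 hA i))
    _ = p * Real.log (∑ i, ∑ j, |A i j|) := by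
        rw [Finset.sum_const]; simp [mul_comm]

theorem wglasso_objective_coercive {p : ℕ} (hp : 0 < p)
    (S : Matrix (Fin p) (Fin p) ℝ) (hS : S.PosSemidef) (ρ : ℝ) (hρ : 0 < ρ) :
    (∀ Ω : ℕ → Matrix (Fin p) (Fin p) ℝ, (∀ n, (Ω n).PosDef) →
      Tendsto (fun n => ∑ i, ∑ j, |Ω n i j|) atTop atTop →
      Tendsto
        (fun n => -Real.log (Ω n).det + (Ω n * S).trace +
          ρ * ∑ i, ∑ j, |Ω n i j|) atTop atTop) ∧
    (∀ (Ω : ℕ → Matrix (Fin p) (Fin p) ℝ) (hpd : ∀ n, (Ω n).PosDef),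
      (∃ B : ℝ, ∀ n, ∑ i, ∑ j, |Ω n i j| ≤ B) →
      Tendsto (fun n => ⨅ i, (hpd n).1.eigenvalues i) atTop (nhds 0) →
      Tendsto
        (fun n => -Real.log (Ω n).det + (Ω n * S).trace +
          ρ * ∑ i, ∑ j, |Ω n i j|) atTop atTop) := by
  haveI : Nonempty (Fin p) := ⟨⟨0, hp⟩⟩
  have habs_nonneg : ∀ (A : Matrix (Fin p) (Fin p) ℝ), (0:ℝ) ≤ ∑ i, ∑ j, |A i j| :=
    fun A => Finset.sum_nonneg fun i _ => Finset.sum_nonneg fun j _ => abs_nonneg _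
  constructor
  · intro Ω hpd ht
    -- g t = ρ t - p log t tends to atTop
    have hG : Tendsto (fun t : ℝ => ρ * t - p * Real.log t) atTop atTop := by
      have hlo : (fun t : ℝ => (p:ℝ) * Real.log t) =o[atTop] (fun t : ℝ => t) := by
        exact (Real.isLittleO_log_id_atTop.const_mul_left (p:ℝ))
      have hev : ∀ᶠ t : ℝ in atTop, ρ/2 * t ≤ ρ * t - p * Real.log t := by
        filter_upwards [hlo.bound (show (0:ℝ) < ρ/2 by linarith), eventually_ge_atTop (0:ℝ)]
          with t hb ht0
        have : (p:ℝ) * Real.log t ≤ ρ/2 * t := by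
          calc (p:ℝ) * Real.log t ≤ ‖(p:ℝ) * Real.log t‖ := Real.le_norm_self _
            _ ≤ ρ/2 * ‖t‖ := hb
            _ = ρ/2 * t := by rw [Real.norm_of_nonneg ht0]
        linarith
      exact tendsto_atTop_mono' _ hev
        (Tendsto.const_mul_atTop (by linarith : (0:ℝ) < ρ/2) tendsto_id)
    refine tendsto_atTop_mono ?_ (hG.comp ht)
    intro n
    have h1 : Real.log (Ω n).det ≤ p * Real.log (∑ i, ∑ j, |Ω n i j|) :=
      logdet_le_l1 (hpd n)
    have h2 : 0 ≤ (Ω n * S).trace := trace_mul_psd_nonneg (hpd n) hS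
    simp only [Function.comp]
    linarith
  · intro Ω hpd ⟨B, hB⟩ hm
    set m : ℕ → ℝ := fun n => ⨅ i, (hpd n).1.eigenvalues i with hmdef
    have hmpos : ∀ n, 0 < m n := by
      intro n
      obtain ⟨i, hi⟩ := exists_eq_ciInf_of_finite (f := (hpd n).1.eigenvalues)
      simp only [hmdef, ← hi]
      exact (hpd n).eigenvalues_pos i
    set B' : ℝ := max B 1 with hB'def
    have hB'1 : (1:ℝ) ≤ B' := le_max_right _ _
    have hlogB' : 0 ≤ Real.log B' := Real.log_nonneg hB'1
    -- key bound : log det ≤ log (m n) + p * log B'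
    have hkey : ∀ n, Real.log (Ω n).det ≤ Real.log (m n) + p * Real.log B' := by
      intro n
      obtain ⟨i0, hi0⟩ := exists_eq_ciInf_of_finite (f := (hpd n).1.eigenvalues)
      have hpos : ∀ i, 0 < (hpd n).1.eigenvalues i := (hpd n).eigenvalues_pos
      have heigle : ∀ i, (hpd n).1.eigenvalues i ≤ B' :=
        fun i => le_max_of_le_left ((eig_le_l1 (hpd n) i).trans (hB n))
      have hdet : (Ω n).det = ∏ i, (hpd n).1.eigenvalues i := by
        simpa using (hpd n).1.det_eq_prod_eigenvalues
      rw [hdet, Real.log_prod (fun i _ => (hpos i).ne')]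
      rw [← Finset.add_sum_erase _ _ (Finset.mem_univ i0)]
      have hle1 : Real.log ((hpd n).1.eigenvalues i0) = Real.log (m n) := by rw [hi0, hmdef]
      have hle2 : ∑ i ∈ Finset.univ.erase i0, Real.log ((hpd n).1.eigenvalues i)
          ≤ p * Real.log B' := by
        calc ∑ i ∈ Finset.univ.erase i0, Real.log ((hpd n).1.eigenvalues i)
            ≤ ∑ _i ∈ Finset.univ.erase i0, Real.log B' :=
              Finset.sum_le_sum fun i _ => Real.log_le_log (hpos i) (heigle i)
          _ = ((Finset.univ.erase i0).card : ℝ) * Real.log B' := by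
              rw [Finset.sum_const]; simp [mul_comm]
          _ ≤ p * Real.log B' := by
              apply mul_le_mul_of_nonneg_right _ hlogB'
              exact_mod_cast (Finset.card_erase_of_mem (Finset.mem_univ i0)).trans_le
                (by simp [Finset.card_univ])
      linarith
    -- -log (m n) → atTop
    have hmlog : Tendsto (fun n => -Real.log (m n)) atTop atTop := by
      have h1 : Tendsto m atTop (nhdsWithin 0 (Set.Ioi 0)) :=
        tendsto_nhdsWithin_iff.mpr ⟨hm, Filter.Eventually.of_forall (fun n => hmpos n)⟩
      have h2 : Tendsto (fun n => Real.log (m n)) atTop atBot :=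
        Real.tendsto_log_nhdsGT_zero.comp h1
      exact tendsto_neg_atBot_atTop.comp h2
    have hfinal : Tendsto (fun n => -Real.log (m n) - p * Real.log B') atTop atTop :=
      tendsto_atTop_add_const_right _ _ hmlog
    refine tendsto_atTop_mono ?_ hfinal
    intro n
    have h2 : 0 ≤ (Ω n * S).trace := trace_mul_psd_nonneg (hpd n) hS
    have h3 : 0 ≤ ρ * ∑ i, ∑ j, |Ω n i j| := mul_nonneg hρ.le (habs_nonneg _)
    have := hkey n
    linarith
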